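/- The sixteen octads H_1 = {1,2,4,12,13,14,17,18}, H_2 = {1,2,8,11,14,16,17,22}, H_3 = {1,8,10,11,13,17,18,21}, H_4 = {1,4,11,13,14,16,20,21}, H_5 = {2,7,8,10,12,17,18,22} are Golay codewords disjoint from the octad O9 = {3,5,6,9,15,19,23,24}, and they span a 5-dimensional subspace of the Golay code consisting of all codewords disjoint from O9. -/

import Mathlib

/-- The indicator vector in `𝔽₂²⁴` of a set of labels in `{1,…,24}`
(coordinate `i : Fin 24` carries the label `i+1`). -/
def indic (s : Finset ℕ) : Fin 24 → ZMod 2 := fun i => if (i : ℕ) + 1 ∈ s then 1 else 0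

/-- An explicit basis of the extended binary Golay code, given by the support sets
of nine octads and three dodecads. -/
def golayBasisSets : Fin 12 → Finset ℕ :=
  ![{1,2,16,18,5,12,22,3}, {7,4,19,10,12,15,8,16}, {23,3,9,19,13,18,8,11},
    {6,3,22,4,21,17,15,9}, {20,10,11,17,14,13,22,12}, {24,2,10,19,9,5,14,21},
    {8,7,15,17,11,23,18,16}, {16,1,2,21,4,7,8,18}, {18,1,16,8,23,13,14,5},
    {8,7,15,9,19,23,4,22,13,18,1,16}, {18,23,13,22,3,1,11,10,2,16,7,8},
    {16,1,2,10,12,7,5,9,15,8,23,18}]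

/-- The extended binary Golay code `𝒢₂₄ ⊂ 𝔽₂²⁴`. -/
def golayCode : Submodule (ZMod 2) (Fin 24 → ZMod 2) :=
  Submodule.span (ZMod 2) (Set.range fun i => indic (golayBasisSets i))

/-- The weight of a vector in `𝔽₂²⁴`: the number of nonzero coordinates. -/
def weight (v : Fin 24 → ZMod 2) : ℕ := (Finset.univ.filter fun i => v i ≠ 0).card

/-- The special octad `𝒪₉ = {3,5,6,9,15,19,23,24}`. -/
def O9 : Finset ℕ := {3, 5, 6, 9, 15, 19, 23, 24}

/-- The five octads `ℋ₁, …, ℋ₅` disjoint from `𝒪₉`. -/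
def Hocts : Fin 5 → Finset ℕ :=
  ![{1,2,4,12,13,14,17,18}, {1,2,8,11,14,16,17,22}, {1,8,10,11,13,17,18,21},
    {1,4,11,13,14,16,20,21}, {2,7,8,10,12,17,18,22}]

/-!
The `ℋᵢ` together with seven further codewords span `𝒢₂₄` (by an explicit change-of-basis
certificate), and on seven coordinates of `𝒪₉` the seven extra
codewords restrict to an identity matrix. A codeword vanishing on `𝒪₉` therefore has zero
coefficients on the extra codewords, so it lies in the span of the `ℋᵢ`.
-/

open Submodule Set

theorem Submodule.mem_span_of_mem_span_union_of_pivots {R M ι κ : Type*} [Semiring R]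
    [AddCommMonoid M] [Module R M] [Fintype κ] [DecidableEq κ] {v : ι → M} {w : κ → M}
    (φ : κ → M →ₗ[R] R) (hv : ∀ k i, φ k (v i) = 0)
    (hw : ∀ k l, φ k (w l) = if k = l then 1 else 0) {c : M}
    (hc : c ∈ span R (range v ∪ range w)) (hφc : ∀ k, φ k c = 0) : c ∈ span R (range v) := by
  rw [span_union, mem_sup] at hc
  obtain ⟨a, ha, y, hy, rfl⟩ := hc
  obtain ⟨b, rfl⟩ := mem_span_range_iff_exists_fun R |>.1 hy
  have hφa (k : κ) : φ k a = 0 :=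
    span_le (p := LinearMap.ker (φ k)) |>.2 (range_subset_iff.2 (hv k)) ha
  have hb (k : κ) : b k = 0 := by
    simpa [hφa, hw] using hφc k
  simpa [hb] using ha

theorem indic_apply_eq_zero_of_disjoint {s t : Finset ℕ} (h : Disjoint s t) {n : Fin 24}
    (hn : (n : ℕ) + 1 ∈ t) : indic s n = 0 :=
  if_neg (Finset.disjoint_right.1 h hn)

theorem weight_indic_hocts (i : Fin 5) : weight (indic (Hocts i)) = 8 := by
  revert i; decide

theorem disjoint_hocts_O9 (i : Fin 5) : Disjoint (Hocts i) O9 := by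
  revert i; decide

theorem linearIndependent_indic_hocts :
    LinearIndependent (ZMod 2) (fun i : Fin 5 => indic (Hocts i)) :=
  Fintype.linearIndependent_iff.2 (by decide +kernel)

/-- Seven codewords completing the `ℋᵢ` to a basis of the Golay code; on the labels
`3, 5, 6, 9, 15, 19, 23` of `𝒪₉` they form an identity matrix. -/
def complementSets : Fin 7 → Finset ℕ :=
  ![{1,2,3,10,11,16,21,24}, {5,10,11,12,18,21,22,24}, {1,6,7,8,14,17,18,24},
    {1,2,4,8,9,11,12,13,16,17,21,24}, {1,7,10,12,13,14,15,17,18,21,22,24},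
    {1,4,8,13,14,16,17,18,19,21,22,24}, {1,8,10,11,12,13,14,16,21,22,23,24}]

def complementPivots : Fin 7 → Fin 24 := ![2, 4, 5, 8, 14, 18, 22]

theorem complementPivots_mem_O9 (k : Fin 7) : (complementPivots k : ℕ) + 1 ∈ O9 := by
  revert k; decide

theorem indic_complementSets_pivot (k l : Fin 7) :
    indic (complementSets l) (complementPivots k) = if k = l then 1 else 0 := by
  revert k l; decide

def hoctsInGolayBasis : Fin 5 → Fin 12 → ZMod 2 :=
  ![![1,0,1,0,0,0,1,0,1,1,0,0], ![0,1,0,0,0,0,1,0,1,1,0,1], ![0,0,1,0,0,0,1,1,0,1,1,0],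
    ![1,1,0,0,1,0,1,1,0,1,1,1], ![1,1,0,0,0,0,1,0,0,1,1,1]]

def golayBasisInHocts : Fin 12 → Fin 5 → ZMod 2 :=
  ![![0,0,0,0,0], ![0,0,0,0,0], ![0,0,0,0,0], ![0,0,0,0,0], ![1,1,1,1,0], ![0,0,0,0,0],
    ![0,0,0,0,0], ![1,1,1,0,1], ![0,0,0,0,0], ![1,0,0,0,0], ![0,1,0,0,1], ![1,1,0,0,0]]

def golayBasisInComplement : Fin 12 → Fin 7 → ZMod 2 :=
  ![![1,1,0,0,0,0,0], ![0,0,0,0,1,1,0], ![1,0,0,1,0,1,1], ![1,0,1,1,1,0,0],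
    ![0,0,0,0,0,0,0], ![0,1,0,1,0,1,0], ![0,0,0,0,1,0,1], ![0,0,0,0,0,0,0],
    ![0,1,0,0,0,0,1], ![0,0,0,1,1,1,1], ![1,0,0,0,0,0,1], ![0,1,0,1,1,0,1]]

theorem indic_hocts_mem_golayCode (i : Fin 5) : indic (Hocts i) ∈ golayCode :=
  mem_span_range_iff_exists_fun _ |>.2 ⟨hoctsInGolayBasis i, by revert i; decide +kernel⟩

theorem golayCode_le_span_hocts_complement :
    golayCode ≤ span (ZMod 2)
      (range (fun i => indic (Hocts i)) ∪ range (fun k => indic (complementSets k))) := by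
  refine span_le.2 (range_subset_iff.2 fun j => ?_)
  rw [span_union]
  refine mem_sup.2 ⟨_, mem_span_range_iff_exists_fun _ |>.2 ⟨golayBasisInHocts j, rfl⟩,
    _, mem_span_range_iff_exists_fun _ |>.2 ⟨golayBasisInComplement j, rfl⟩, ?_⟩
  revert j; decide +kernel

theorem span_indic_hocts :
    span (ZMod 2) (range fun i : Fin 5 => indic (Hocts i)) =
      golayCode ⊓ pi {n : Fin 24 | (n : ℕ) + 1 ∈ O9} fun _ => ⊥ := by
  refine le_antisymm (span_le.2 (range_subset_iff.2 fun i => ⟨indic_hocts_mem_golayCode i, ?_⟩))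
    fun c ⟨hc, hc0⟩ => ?_
  · exact Submodule.mem_pi.2 fun n hn =>
      (mem_bot _).2 (indic_apply_eq_zero_of_disjoint (disjoint_hocts_O9 i) hn)
  · refine mem_span_of_mem_span_union_of_pivots (fun k => LinearMap.proj (complementPivots k))
      (fun k i => ?_) indic_complementSets_pivot
      (golayCode_le_span_hocts_complement hc)
      fun k => (mem_bot _).1 (Submodule.mem_pi.1 hc0 _ (complementPivots_mem_O9 k))
    exact indic_apply_eq_zero_of_disjoint (disjoint_hocts_O9 i) (complementPivots_mem_O9 k)

theorem five_octads_span :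
    (∀ i : Fin 5, indic (Hocts i) ∈ golayCode ∧ weight (indic (Hocts i)) = 8 ∧
      Disjoint (Hocts i) O9) ∧
    LinearIndependent (ZMod 2) (fun i : Fin 5 => indic (Hocts i)) ∧
    (↑(Submodule.span (ZMod 2) (Set.range fun i : Fin 5 => indic (Hocts i)))
      = { c | c ∈ golayCode ∧ ∀ n : Fin 24, (n : ℕ) + 1 ∈ O9 → c n = 0 }) := by
  refine ⟨fun i => ⟨indic_hocts_mem_golayCode i, weight_indic_hocts i, disjoint_hocts_O9 i⟩,
    linearIndependent_indic_hocts, ?_⟩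
  rw [span_indic_hocts]
  ext c
  simp
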